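/- Let F be a free group with basis {g_j : j ∈ J}, K ⊆ J, F_K = ⟨g_j : j ∈ K⟩, N a normal subgroup of F, 𝔑 = ℤ[F]·(N−1), and v ∈ F. Then D_k(v) ≡ 0 mod 𝔑 for all k ∈ J \ K if and only if v ∈ F_K · (F_K ∩ N)^F · [N, N], where (F_K ∩ N)^F is the normal closure of F_K ∩ N in F. -/

import Mathlib

open MonoidAlgebra

/-- The augmentation homomorphism `ℤ[F] → ℤ`. -/
noncomputable def aug (J : Type) : MonoidAlgebra ℤ (FreeGroup J) →ₐ[ℤ] ℤ :=
  MonoidAlgebra.lift ℤ ℤ (FreeGroup J) 1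

/-- `D` is the Fox derivative of `ℤ[FreeGroup J]` with respect to the generator `k`. -/
structure IsFoxDeriv (J : Type) [DecidableEq J] (k : J)
    (D : MonoidAlgebra ℤ (FreeGroup J) → MonoidAlgebra ℤ (FreeGroup J)) : Prop where
  map_add : ∀ u v, D (u + v) = D u + D v
  leibniz : ∀ u v, D (u * v) = D u * v + aug J u • D v
  on_gen : ∀ j : J, D (MonoidAlgebra.of ℤ (FreeGroup J) (FreeGroup.of j)) =
      if k = j then 1 else 0

/-!
Write `H = F_K`, `W = (H ∩ N)^F` and `𝔑 = ℤ[F](N - 1)`. Pushing the fundamental formula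
`v - 1 = ∑ⱼ (gⱼ - 1) Dⱼ v` forward to `ℤ[H \ F / N]` kills the terms with `j ∈ K` (as `gⱼ ∈ H`)
and those with `j ∉ K` (as `Dⱼ v ∈ 𝔑`), so `v ∈ HN` and we may assume `v ∈ N`. The elements of `N`
with `Dₖ v ∈ 𝔑` for `k ∉ K` form a normal subgroup containing `W` and `[N, N]`. Conversely, for
such `v` the relation `∑_{j ∈ K} (gⱼ - 1) Dⱼ v ∈ 𝔑` splits along the double cosets `H t N`; after
translating by `t⁻¹` and moving coefficients into `H` modulo `N`, each piece is an element of
`ℤ[H] ∩ 𝔑 ⊆ ℤ[F](H ∩ N - 1)`, whose Fox derivatives are those of an element of `H ∩ N` modulo `𝔑`.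
Hence `Dᵢ v ≡ Dᵢ w` for some `w ∈ W`, and `v w⁻¹ ∈ [N, N]` by Blanchfield's argument: the map
`ℤ[F] → N^ab`, `g ↦ [r(g)⁻¹ g]` for a transversal `r` of `F / N`, vanishes on `(gⱼ - 1) 𝔑` and
sends `n - 1` to `[n]`.
-/

lemma aug_of {J : Type} (g : FreeGroup J) : aug J (of ℤ (FreeGroup J) g) = 1 := by
  simp [aug]

namespace FoxCalculus

section Component

open scoped Classical

variable {M X : Type*} (c : M → X)

noncomputable def component (ω : X) : ℤ[M] →+ ℤ[M] :=
  coeffAddEquiv.symm.toAddMonoidHom.comp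
    ((Finsupp.filterAddHom (fun g => c g = ω)).comp coeffAddEquiv.toAddMonoidHom)

variable {c}

lemma coeff_component (ω : X) (x : ℤ[M]) (g : M) :
    (component c ω x).coeff g = if c g = ω then x.coeff g else 0 :=
  Finsupp.filter_apply _ _ _

lemma component_of [MulOneClass M] (ω : X) (g : M) :
    component c ω (of ℤ M g) = if c g = ω then of ℤ M g else 0 := by
  ext a
  rw [coeff_component]
  by_cases hga : g = a
  · subst hga; split_ifs <;> rfl
  · split_ifs <;> simp [of_apply, hga]

lemma eq_of_mem_support_component {ω : X} {x : ℤ[M]} {g : M}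
    (hg : g ∈ (component c ω x).coeff.support) : c g = ω := by
  by_contra h
  exact Finsupp.mem_support_iff.mp hg (by rw [coeff_component, if_neg h])

lemma sum_component (x : ℤ[M]) {O : Finset X} (hO : ∀ g ∈ x.coeff.support, c g ∈ O) :
    ∑ ω ∈ O, component c ω x = x := by
  ext g
  simp only [coeff_sum, Finsupp.finsetSum_apply, coeff_component, Finset.sum_ite_eq]
  split_ifs with h
  · rfl
  · exact (Finsupp.notMem_support_iff.mp (mt (hO g) h)).symm

lemma component_of_mul [Monoid M] {a : M} (ha : ∀ g, c (a * g) = c g) (ω : X) (x : ℤ[M]) :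
    component c ω (of ℤ M a * x) = of ℤ M a * component c ω x := by
  induction x using MonoidAlgebra.induction_on with
  | of g => rw [← map_mul, component_of, component_of, ha]; split_ifs <;> simp
  | add x y hx hy => rw [mul_add, map_add, map_add, hx, hy, mul_add]
  | smul r x hx => rw [mul_smul_comm, map_zsmul, map_zsmul, hx, mul_smul_comm]

end Component

lemma mapDomain_mem_supported {M : Type*} {f : M → M} {S : Set M} {x : ℤ[M]}
    (h : ∀ g ∈ x.coeff.support, f g ∈ S) : mapDomainLinearMap ℤ ℤ f x ∈ supported ℤ ℤ S := by
  classical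
  intro g hg
  obtain ⟨g', hg', rfl⟩ := Finset.mem_image.mp (Finsupp.mapDomain_support hg)
  exact h g' hg'

variable {G : Type*} [Group G]

section CosetRep

variable (H N : Subgroup G)

open Classical in
noncomputable def cosetRep (q : G ⧸ N) : G :=
  if h : ∃ a ∈ H, (a : G ⧸ N) = q then h.choose else q.out

lemma mk_cosetRep (q : G ⧸ N) : ((cosetRep H N q : G) : G ⧸ N) = q := by
  unfold cosetRep
  split_ifs with h
  · exact h.choose_spec.2
  · exact QuotientGroup.out_eq' q

lemma inv_cosetRep_mul_mem (g : G) : (cosetRep H N g)⁻¹ * g ∈ N :=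
  QuotientGroup.eq.mp (mk_cosetRep H N g)

variable {H N} in
lemma cosetRep_mem {a n : G} (ha : a ∈ H) (hn : n ∈ N) : cosetRep H N (a * n : G) ∈ H := by
  have h : ∃ b ∈ H, (b : G ⧸ N) = (a * n : G) := ⟨a, ha, (QuotientGroup.mk_mul_of_mem a hn).symm⟩
  rw [cosetRep, dif_pos h]
  exact h.choose_spec.1

end CosetRep

section LeftAugIdeal

variable {N : Subgroup G}

variable (N) in
/-- `𝔑` in the paper. -/
noncomputable def leftAugIdeal : Ideal ℤ[G] :=
  Ideal.span ((fun n => of ℤ G n - 1) '' N)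

lemma of_sub_one_mem_leftAugIdeal {n : G} (hn : n ∈ N) : of ℤ G n - 1 ∈ leftAugIdeal N :=
  Ideal.subset_span ⟨n, hn, rfl⟩

lemma of_mul_sub_of_mem_leftAugIdeal (g : G) {n : G} (hn : n ∈ N) :
    of ℤ G (g * n) - of ℤ G g ∈ leftAugIdeal N := by
  rw [map_mul, ← mul_sub_one]
  exact Ideal.mul_mem_left _ _ (of_sub_one_mem_leftAugIdeal hn)

@[elab_as_elim]
lemma leftAugIdeal_induction {p : ℤ[G] → Prop}
    (basic : ∀ g, ∀ n ∈ N, p (of ℤ G (g * n) - of ℤ G g)) (zero : p 0)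
    (add : ∀ x y, p x → p y → p (x + y)) (zsmul : ∀ (c : ℤ) x, p x → p (c • x))
    {y : ℤ[G]} (hy : y ∈ leftAugIdeal N) : p y := by
  let P : Submodule ℤ ℤ[G] :=
    { carrier := {x | p x}, add_mem' := add _ _, zero_mem' := zero, smul_mem' := zsmul }
  suffices h : ∀ x, x * y ∈ P by
    have hy := h 1
    rwa [one_mul] at hy
  induction hy using Submodule.span_induction with
  | mem z hz =>
    obtain ⟨n, hn, rfl⟩ := hz
    intro x
    induction x using MonoidAlgebra.induction_on with
    | of g => rw [mul_sub_one, ← map_mul]; exact basic g n hn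
    | add a b ha hb => rw [add_mul]; exact P.add_mem ha hb
    | smul c a ha => rw [smul_mul_assoc]; exact P.smul_mem c ha
  | zero => intro x; rw [mul_zero]; exact P.zero_mem
  | add a b _ _ ha hb => intro x; rw [mul_add]; exact P.add_mem (ha x) (hb x)
  | smul a b _ hb => intro x; rw [smul_eq_mul, ← mul_assoc]; exact hb _

lemma mul_of_smodEq (x : ℤ[G]) {n : G} (hn : n ∈ N) :
    x * of ℤ G n ≡ x [SMOD leftAugIdeal N] := by
  rw [SModEq.sub_mem, ← mul_sub_one]
  exact Ideal.mul_mem_left _ _ (of_sub_one_mem_leftAugIdeal hn)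

lemma mul_of_mem_leftAugIdeal (hN : N.Normal) {y : ℤ[G]} (hy : y ∈ leftAugIdeal N) (t : G) :
    y * of ℤ G t ∈ leftAugIdeal N := by
  refine leftAugIdeal_induction (fun g n hn => ?_) ?_ (fun x y hx hy => ?_) (fun c x hx => ?_) hy
  · rw [sub_mul, ← map_mul, ← map_mul, show g * n * t = g * t * (t⁻¹ * n * t) by group]
    exact of_mul_sub_of_mem_leftAugIdeal _ (by simpa using hN.conj_mem n hn t⁻¹)
  · rw [zero_mul]; exact zero_mem _
  · rw [add_mul]; exact add_mem hx hy
  · rw [smul_mul_assoc]; exact Submodule.smul_of_tower_mem _ c hx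

lemma _root_.SModEq.mul_of (hN : N.Normal) {x y : ℤ[G]} (h : x ≡ y [SMOD leftAugIdeal N]) (t : G) :
    x * of ℤ G t ≡ y * of ℤ G t [SMOD leftAugIdeal N] := by
  rw [SModEq.sub_mem, ← sub_mul]
  exact mul_of_mem_leftAugIdeal hN (SModEq.sub_mem.mp h) t

lemma mapDomain_eq_zero_of_mem_leftAugIdeal {X : Type*} {c : G → X}
    (hc : ∀ g, ∀ n ∈ N, c (g * n) = c g) {y : ℤ[G]} (hy : y ∈ leftAugIdeal N) :
    mapDomainLinearMap ℤ ℤ c y = 0 := by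
  refine leftAugIdeal_induction (fun g n hn => ?_) (map_zero _) (fun x y hx hy => ?_)
    (fun a x hx => ?_) hy
  · rw [map_sub, of_apply, of_apply, mapDomainLinearMap_single, mapDomainLinearMap_single,
      hc g n hn, sub_self]
  · rw [map_add, hx, hy, add_zero]
  · rw [map_smul, hx, smul_zero]

lemma mapDomain_of_mul {X : Type*} {c : G → X} {a : G} (hc : ∀ g, c (a * g) = c g) (x : ℤ[G]) :
    mapDomainLinearMap ℤ ℤ c (of ℤ G a * x) = mapDomainLinearMap ℤ ℤ c x := by
  induction x using MonoidAlgebra.induction_on with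
  | of g => rw [← map_mul, of_apply, of_apply, mapDomainLinearMap_single,
      mapDomainLinearMap_single, hc]
  | add x y hx hy => rw [mul_add, map_add, map_add, hx, hy]
  | smul r x hx => rw [mul_smul_comm, map_smul, map_smul, hx]

lemma mapDomain_cosetRep_smodEq (H : Subgroup G) (x : ℤ[G]) :
    mapDomainLinearMap ℤ ℤ (fun g : G => cosetRep H N g) x ≡ x [SMOD leftAugIdeal N] := by
  induction x using MonoidAlgebra.induction_on with
  | of g =>
    rw [of_apply, mapDomainLinearMap_single, ← of_apply, SModEq.comm, SModEq.sub_mem]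
    simpa using of_mul_sub_of_mem_leftAugIdeal (cosetRep H N g) (inv_cosetRep_mul_mem H N g)
  | add x y hx hy => rw [map_add]; exact hx.add hy
  | smul r x hx => rw [map_smul]; exact hx.zsmul r

lemma of_mul_mem_supported {H : Subgroup G} {h : G} (hh : h ∈ H) {y : ℤ[G]}
    (hy : y ∈ supported ℤ ℤ (H : Set G)) : of ℤ G h * y ∈ supported ℤ ℤ (H : Set G) := by
  rw [mem_supported, of_apply, support_coeff_single_mul _ _ (by simp) h]
  intro g' hg'
  obtain ⟨g, hg, rfl⟩ := Finset.mem_map.mp hg'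
  exact mul_mem hh (hy hg)

/-- `cosetRep H N` moves each `h ∈ H` within `h (H ∩ N)` and kills `ℤ[G](N - 1)`. -/
lemma mem_leftAugIdeal_inf_of_mem_supported {H : Subgroup G} {z : ℤ[G]}
    (hzH : z ∈ supported ℤ ℤ (H : Set G)) (hzN : z ∈ leftAugIdeal N) :
    z ∈ leftAugIdeal (H ⊓ N) := by
  have h0 : mapDomainLinearMap ℤ ℤ (fun g : G => cosetRep H N g) z = 0 :=
    mapDomain_eq_zero_of_mem_leftAugIdeal
      (fun g n hn => by simp only [QuotientGroup.mk_mul_of_mem g hn]) hzN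
  have key : ∀ x ∈ supported ℤ ℤ (H : Set G),
      x - mapDomainLinearMap ℤ ℤ (fun g : G => cosetRep H N g) x ∈ leftAugIdeal (H ⊓ N) := by
    intro x hx
    rw [supported_eq_span_single] at hx
    induction hx using Submodule.span_induction with
    | mem x hx =>
      obtain ⟨h, hh, rfl⟩ := hx
      have hr : cosetRep H N h ∈ H := by simpa using cosetRep_mem hh (one_mem N)
      simp only [← of_apply]
      simpa using of_mul_sub_of_mem_leftAugIdeal (N := H ⊓ N) (cosetRep H N h)
        (Subgroup.mem_inf.mpr ⟨mul_mem (inv_mem hr) hh, inv_cosetRep_mul_mem H N h⟩)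
    | zero => simp
    | add x y _ _ hx hy => rw [map_add, add_sub_add_comm]; exact add_mem hx hy
    | smul c x _ hx => rw [map_smul, ← smul_sub]; exact Submodule.smul_of_tower_mem _ c hx
  simpa [h0] using key z hzH

lemma component_mem_leftAugIdeal {X : Type*} {c : G → X} (hc : ∀ g, ∀ n ∈ N, c (g * n) = c g)
    (ω : X) {y : ℤ[G]} (hy : y ∈ leftAugIdeal N) : component c ω y ∈ leftAugIdeal N := by
  refine leftAugIdeal_induction (fun g n hn => ?_) ?_ (fun x y hx hy => ?_) (fun r x hx => ?_) hy
  · rw [map_sub, component_of, component_of, hc g n hn]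
    split_ifs
    · exact of_mul_sub_of_mem_leftAugIdeal g hn
    · rw [sub_self]; exact zero_mem _
  · rw [map_zero]; exact zero_mem _
  · rw [map_add]; exact add_mem hx hy
  · rw [map_zsmul]; exact Submodule.smul_of_tower_mem _ r hx

end LeftAugIdeal

section CosetOffset

variable (N : Subgroup G)

noncomputable def cosetOffset (g : G) : Additive (Abelianization N) :=
  Additive.ofMul (Abelianization.of
    ⟨(g : G ⧸ N).out⁻¹ * g, QuotientGroup.eq.mp (QuotientGroup.out_eq' _)⟩)

noncomputable def cosetOffsetHom : ℤ[G] →ₗ[ℤ] Additive (Abelianization N) :=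
  Finsupp.lift _ ℤ G (cosetOffset N) ∘ₗ (coeffLinearEquiv ℤ).toLinearMap

variable {N}

lemma cosetOffsetHom_of (g : G) : cosetOffsetHom N (of ℤ G g) = cosetOffset N g := by
  simp [cosetOffsetHom, of_apply, coeffLinearEquiv]

lemma cosetOffset_mul (g : G) {n : G} (hn : n ∈ N) :
    cosetOffset N (g * n) = cosetOffset N g + Additive.ofMul (Abelianization.of ⟨n, hn⟩) := by
  have hq : ((g * n : G) : G ⧸ N) = g := QuotientGroup.mk_mul_of_mem g hn
  rw [cosetOffset, cosetOffset, ← ofMul_mul, ← map_mul]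
  congr 2
  ext
  simp [hq, mul_assoc]

lemma cosetOffsetHom_of_mul_sub_of (g : G) {n : G} (hn : n ∈ N) :
    cosetOffsetHom N (of ℤ G (g * n) - of ℤ G g) = Additive.ofMul (Abelianization.of ⟨n, hn⟩) := by
  rw [map_sub, cosetOffsetHom_of, cosetOffsetHom_of, cosetOffset_mul g hn, add_sub_cancel_left]

lemma cosetOffsetHom_of_mul {y : ℤ[G]} (hy : y ∈ leftAugIdeal N) (g : G) :
    cosetOffsetHom N (of ℤ G g * y) = cosetOffsetHom N y := by
  refine leftAugIdeal_induction (fun a n hn => ?_) ?_ (fun x y hx hy => ?_) (fun r x hx => ?_) hy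
  · rw [mul_sub, ← map_mul, ← map_mul, ← mul_assoc, cosetOffsetHom_of_mul_sub_of _ hn,
      cosetOffsetHom_of_mul_sub_of _ hn]
  · rw [mul_zero]
  · rw [mul_add, map_add, map_add, hx, hy]
  · rw [mul_smul_comm, map_smul, map_smul, hx]

end CosetOffset

section DoubleCoset

variable {H N : Subgroup G}

lemma doubleCoset_mk_mul_left {a : G} (ha : a ∈ H) (g : G) :
    DoubleCoset.mk H N (a * g) = DoubleCoset.mk H N g :=
  (DoubleCoset.eq H N _ _).mpr ⟨a⁻¹, inv_mem ha, 1, one_mem N, by group⟩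

lemma doubleCoset_mk_mul_right (g : G) {n : G} (hn : n ∈ N) :
    DoubleCoset.mk H N (g * n) = DoubleCoset.mk H N g :=
  (DoubleCoset.eq H N _ _).mpr ⟨1, one_mem H, n⁻¹, inv_mem hn, by group⟩

end DoubleCoset

end FoxCalculus

namespace IsFoxDeriv

open FoxCalculus

variable {J : Type} [DecidableEq J] {k : J} {Dk : ℤ[FreeGroup J] → ℤ[FreeGroup J]}
  (h : IsFoxDeriv J k Dk)

local notation "F" => FreeGroup J

include h

noncomputable def toAddMonoidHom : ℤ[F] →+ ℤ[F] := AddMonoidHom.mk' Dk h.map_add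

lemma map_zero : Dk 0 = 0 := h.toAddMonoidHom.map_zero

lemma map_sub (x y : ℤ[F]) : Dk (x - y) = Dk x - Dk y := h.toAddMonoidHom.map_sub x y

lemma map_sum {ι : Type*} (s : Finset ι) (x : ι → ℤ[F]) : Dk (∑ i ∈ s, x i) = ∑ i ∈ s, Dk (x i) :=
  _root_.map_sum h.toAddMonoidHom x s

lemma map_zsmul (r : ℤ) (x : ℤ[F]) : Dk (r • x) = r • Dk x := _root_.map_zsmul h.toAddMonoidHom r x

lemma map_one : Dk 1 = 0 := by
  have h1 := h.leibniz 1 1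
  rw [mul_one, _root_.map_one, one_smul] at h1
  simpa using h1

lemma map_of_mul_left (a : F) (x : ℤ[F]) : Dk (of ℤ F a * x) = Dk (of ℤ F a) * x + Dk x := by
  rw [h.leibniz, aug_of, one_smul]

lemma map_of_mul (a b : F) : Dk (of ℤ F (a * b)) = Dk (of ℤ F a) * of ℤ F b + Dk (of ℤ F b) := by
  rw [_root_.map_mul, h.map_of_mul_left]

lemma map_of_inv (a : F) : Dk (of ℤ F a⁻¹) = -(Dk (of ℤ F a) * of ℤ F a⁻¹) := by
  have h1 := h.map_of_mul a a⁻¹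
  rw [mul_inv_cancel, _root_.map_one, h.map_one] at h1
  exact eq_neg_of_add_eq_zero_right h1.symm

lemma map_of_eq_zero_of_mem_closure {K : Set J} (hk : k ∉ K) {a : F}
    (ha : a ∈ Subgroup.closure (FreeGroup.of '' K)) : Dk (of ℤ F a) = 0 := by
  induction ha using Subgroup.closure_induction with
  | mem x hx =>
    obtain ⟨j, hj, rfl⟩ := hx
    rw [h.on_gen, if_neg (by rintro rfl; exact hk hj)]
  | one => rw [_root_.map_one, h.map_one]
  | mul x y _ _ hx hy => rw [h.map_of_mul, hx, hy, zero_mul, zero_add]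
  | inv x _ hx => rw [h.map_of_inv, hx, zero_mul, neg_zero]

lemma map_of_mul_of_mem_closure {K : Set J} (hk : k ∉ K) {a : F}
    (ha : a ∈ Subgroup.closure (FreeGroup.of '' K)) (x : F) :
    Dk (of ℤ F (a * x)) = Dk (of ℤ F x) := by
  rw [_root_.map_mul, h.map_of_mul_left, h.map_of_eq_zero_of_mem_closure hk ha, zero_mul, zero_add]

lemma map_of_sub_one_mul (j : J) (u : ℤ[F]) :
    Dk ((of ℤ F (FreeGroup.of j) - 1) * u) = if k = j then u else 0 := by
  rw [sub_mul, one_mul, h.map_sub, h.map_of_mul_left, h.on_gen]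
  split_ifs <;> simp

variable {N : Subgroup (FreeGroup J)}

lemma map_of_mul_smodEq (a : F) {n : F} (hn : n ∈ N) :
    Dk (of ℤ F (a * n)) ≡ Dk (of ℤ F a) + Dk (of ℤ F n) [SMOD leftAugIdeal N] := by
  rw [h.map_of_mul]
  exact (mul_of_smodEq _ hn).add SModEq.rfl

lemma map_of_inv_smodEq {n : F} (hn : n ∈ N) :
    Dk (of ℤ F n⁻¹) ≡ -Dk (of ℤ F n) [SMOD leftAugIdeal N] := by
  rw [h.map_of_inv]
  exact (mul_of_smodEq _ (inv_mem hn)).neg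

lemma map_of_conj_smodEq (hN : N.Normal) {n : F} (hn : n ∈ N) (t : F) :
    Dk (of ℤ F (t⁻¹ * n * t)) ≡ Dk (of ℤ F n) * of ℤ F t [SMOD leftAugIdeal N] := by
  have hconj : t⁻¹ * n * t ∈ N := by simpa using hN.conj_mem n hn t⁻¹
  have e : Dk (of ℤ F (t⁻¹ * n * t)) - Dk (of ℤ F n) * of ℤ F t =
      -(Dk (of ℤ F t) * (of ℤ F (t⁻¹ * n * t) - 1)) := by
    rw [h.map_of_mul, h.map_of_mul, h.map_of_inv]
    simp only [_root_.map_mul]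
    noncomm_ring
  rw [SModEq.sub_mem, e]
  exact neg_mem (Ideal.mul_mem_left _ _ (of_sub_one_mem_leftAugIdeal hconj))

end IsFoxDeriv

namespace FoxCalculus

variable {J : Type} [DecidableEq J] {D : J → ℤ[FreeGroup J] → ℤ[FreeGroup J]}
  (hD : ∀ k, IsFoxDeriv J k (D k))

local notation "F" => FreeGroup J

include hD in
/-- The fundamental formula of Fox calculus. -/
theorem exists_of_sub_one_eq_sum (v : F) :
    ∃ s : Finset J, (∀ j ∉ s, D j (of ℤ F v) = 0) ∧
      ∀ t, s ⊆ t → of ℤ F v - 1 = ∑ j ∈ t, (of ℤ F (FreeGroup.of j) - 1) * D j (of ℤ F v) := by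
  have hv : v ∈ Subgroup.closure (Set.range FreeGroup.of) := by simp
  induction hv using Subgroup.closure_induction with
  | mem x hx =>
    obtain ⟨i, rfl⟩ := hx
    refine ⟨{i}, fun j hj => by rw [(hD j).on_gen, if_neg (by simpa using hj)], fun t ht => ?_⟩
    simp_rw [(hD _).on_gen, mul_ite, mul_one, mul_zero, Finset.sum_ite_eq',
      if_pos (ht (Finset.mem_singleton_self i))]
  | one =>
    refine ⟨∅, fun j _ => by rw [map_one, (hD j).map_one], fun t _ => ?_⟩
    rw [map_one, sub_self]
    exact (Finset.sum_eq_zero fun j _ => by rw [(hD j).map_one, mul_zero]).symm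
  | mul x y _ _ hx hy =>
    obtain ⟨s₁, hs₁, hx⟩ := hx
    obtain ⟨s₂, hs₂, hy⟩ := hy
    refine ⟨s₁ ∪ s₂, fun j hj => ?_, fun t ht => ?_⟩
    · rw [Finset.mem_union, not_or] at hj
      rw [(hD j).map_of_mul, hs₁ j hj.1, hs₂ j hj.2, zero_mul, zero_add]
    · rw [Finset.sum_congr rfl fun j _ => by rw [(hD j).map_of_mul, mul_add, ← mul_assoc],
        Finset.sum_add_distrib, ← Finset.sum_mul, ← hx t (Finset.union_subset_left ht),
        ← hy t (Finset.union_subset_right ht), map_mul]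
      noncomm_ring
  | inv x _ hx =>
    obtain ⟨s, hs, hx⟩ := hx
    refine ⟨s, fun j hj => by rw [(hD j).map_of_inv, hs j hj, zero_mul, neg_zero], fun t ht => ?_⟩
    rw [Finset.sum_congr rfl fun j _ => by rw [(hD j).map_of_inv, mul_neg, ← mul_assoc],
      Finset.sum_neg_distrib, ← Finset.sum_mul, ← hx t ht, sub_mul, ← map_mul, mul_inv_cancel,
      map_one, one_mul]
    abel

def foxSubgroup (N : Subgroup F) (P : Set J) : Subgroup F where
  carrier := {v | v ∈ N ∧ ∀ k ∈ P, D k (of ℤ F v) ∈ leftAugIdeal N}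
  mul_mem' := by
    rintro a b ⟨ha, hDa⟩ ⟨hb, hDb⟩
    refine ⟨mul_mem ha hb, fun k hk => SModEq.zero.mp ?_⟩
    simpa using ((hD k).map_of_mul_smodEq a hb).trans
      ((SModEq.zero.mpr (hDa k hk)).add (SModEq.zero.mpr (hDb k hk)))
  one_mem' := ⟨one_mem N, fun k _ => by rw [map_one, (hD k).map_one]; exact zero_mem _⟩
  inv_mem' := by
    rintro a ⟨ha, hDa⟩
    refine ⟨inv_mem ha, fun k hk => SModEq.zero.mp ?_⟩
    simpa using ((hD k).map_of_inv_smodEq ha).trans (SModEq.zero.mpr (hDa k hk)).neg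

variable {N : Subgroup (FreeGroup J)}

lemma foxSubgroup_normal (hN : N.Normal) (P : Set J) : (foxSubgroup hD N P).Normal := by
  refine ⟨fun n ⟨hn, hDn⟩ g => ⟨hN.conj_mem n hn g, fun k hk => SModEq.zero.mp ?_⟩⟩
  have h := (hD k).map_of_conj_smodEq hN hn g⁻¹
  rw [inv_inv] at h
  exact h.trans (SModEq.zero.mpr (mul_of_mem_leftAugIdeal hN (hDn k hk) g⁻¹))

lemma commutator_le_foxSubgroup (P : Set J) : ⁅N, N⁆ ≤ foxSubgroup hD N P := by
  rw [Subgroup.commutator_le]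
  intro a ha b hb
  rw [commutatorElement_def]
  refine ⟨mul_mem (mul_mem (mul_mem ha hb) (inv_mem ha)) (inv_mem hb), fun k _ => SModEq.zero.mp ?_⟩
  calc D k (of ℤ F (a * b * a⁻¹ * b⁻¹))
      ≡ D k (of ℤ F (a * b)) + D k (of ℤ F a⁻¹) + D k (of ℤ F b⁻¹) [SMOD leftAugIdeal N] :=
        ((hD k).map_of_mul_smodEq _ (inv_mem hb)).trans
          (((hD k).map_of_mul_smodEq _ (inv_mem ha)).add SModEq.rfl)
    _ ≡ D k (of ℤ F a) + D k (of ℤ F b) + -D k (of ℤ F a) + -D k (of ℤ F b)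
        [SMOD leftAugIdeal N] :=
        (((hD k).map_of_mul_smodEq a hb).add ((hD k).map_of_inv_smodEq ha)).add
          ((hD k).map_of_inv_smodEq hb)
    _ = 0 := by abel

lemma closure_inf_le_foxSubgroup_compl (K : Set J) :
    Subgroup.closure (FreeGroup.of '' K) ⊓ N ≤ foxSubgroup hD N Kᶜ :=
  fun _ ⟨haK, haN⟩ => ⟨haN, fun k hk => by
    rw [(hD k).map_of_eq_zero_of_mem_closure hk haK]; exact zero_mem _⟩

/-- Blanchfield's theorem. -/
theorem foxSubgroup_univ_le_commutator : foxSubgroup hD N Set.univ ≤ ⁅N, N⁆ := by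
  rintro n ⟨hn, hDn⟩
  obtain ⟨s, -, hs⟩ := exists_of_sub_one_eq_sum hD n
  have h0 : cosetOffsetHom N (of ℤ F n - 1) = 0 := by
    rw [hs s subset_rfl, map_sum]
    refine Finset.sum_eq_zero fun j _ => ?_
    rw [sub_mul, one_mul, map_sub, cosetOffsetHom_of_mul (hDn j trivial), sub_self]
  have h1 := cosetOffsetHom_of_mul_sub_of (N := N) 1 hn
  rw [one_mul, map_one, h0] at h1
  have hcomm : (⟨n, hn⟩ : N) ∈ commutator N := by
    rw [← Abelianization.ker_of, MonoidHom.mem_ker]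
    exact ofMul_eq_zero.mp h1.symm
  simpa [Subgroup.map_subtype_commutator] using Subgroup.mem_map_of_mem N.subtype hcomm

section Realizable

variable {W : Subgroup (FreeGroup J)}

def foxRealizable (N W : Subgroup F) (hWN : W ≤ N) : AddSubgroup (J → ℤ[F]) where
  carrier := {x | ∃ w ∈ W, ∀ i, x i ≡ D i (of ℤ F w) [SMOD leftAugIdeal N]}
  add_mem' := by
    rintro x y ⟨a, ha, hxa⟩ ⟨b, hb, hyb⟩
    exact ⟨a * b, mul_mem ha hb, fun i =>
      ((hxa i).add (hyb i)).trans ((hD i).map_of_mul_smodEq a (hWN hb)).symm⟩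
  zero_mem' := ⟨1, one_mem W, fun i => by rw [map_one, (hD i).map_one]; rfl⟩
  neg_mem' := by
    rintro x ⟨a, ha, hxa⟩
    exact ⟨a⁻¹, inv_mem ha, fun i => (hxa i).neg.trans ((hD i).map_of_inv_smodEq (hWN ha)).symm⟩

variable {hD} {hWN : W ≤ N}

lemma mem_foxRealizable_of_smodEq {x y : J → ℤ[F]} (hx : x ∈ foxRealizable hD N W hWN)
    (hxy : ∀ i, y i ≡ x i [SMOD leftAugIdeal N]) : y ∈ foxRealizable hD N W hWN := by
  obtain ⟨w, hw, hxw⟩ := hx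
  exact ⟨w, hw, fun i => (hxy i).trans (hxw i)⟩

lemma mul_of_mem_foxRealizable (hN : N.Normal) (hW : W.Normal) {x : J → ℤ[F]}
    (hx : x ∈ foxRealizable hD N W hWN) (t : F) :
    (fun i => x i * of ℤ F t) ∈ foxRealizable hD N W hWN := by
  obtain ⟨w, hw, hxw⟩ := hx
  exact ⟨t⁻¹ * w * t, by simpa using hW.conj_mem w hw t⁻¹, fun i =>
    ((hxw i).mul_of hN t).trans ((hD i).map_of_conj_smodEq hN (hWN hw) t).symm⟩

lemma fox_mem_foxRealizable_of_mem_leftAugIdeal {M : Subgroup F} (hMW : M ≤ W) {z : ℤ[F]}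
    (hz : z ∈ leftAugIdeal M) : (fun i => D i z) ∈ foxRealizable hD N W hWN := by
  refine leftAugIdeal_induction (fun g m hm => ⟨m, hMW hm, fun i => ?_⟩) ?_
    (fun x y hx hy => ?_) (fun r x hx => ?_) hz
  · have h := ((hD i).map_of_mul_smodEq g (hWN (hMW hm))).sub (SModEq.refl (D i (of ℤ F g)))
    rwa [add_sub_cancel_left, ← (hD i).map_sub] at h
  · convert zero_mem (foxRealizable hD N W hWN) using 1
    exact funext fun i => (hD i).map_zero
  · convert add_mem hx hy using 1
    exact funext fun i => (hD i).map_add x y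
  · convert zsmul_mem hx r using 1
    exact funext fun i => (hD i).map_zsmul r x

/-- Translating by `t⁻¹` and replacing coefficients by `cosetRep` moves the `uⱼ` into `ℤ[H]`
modulo `ℤ[F](N - 1)`; the translated relation then lies in `ℤ[H] ∩ ℤ[F](N - 1) ⊆ ℤ[F](H ∩ N - 1)`,
whose Fox derivatives are realised by `H ∩ N ≤ W`. -/
lemma ite_mem_foxRealizable (hN : N.Normal) (hW : W.Normal) {H : Subgroup F} (hHW : H ⊓ N ≤ W)
    {s : Finset J} (hs : ∀ j ∈ s, FreeGroup.of j ∈ H) {t : F} {u : J → ℤ[F]}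
    (hu : ∀ j ∈ s, ∀ g ∈ (u j).coeff.support, DoubleCoset.mk H N g = DoubleCoset.mk H N t)
    (hsum : ∑ j ∈ s, (of ℤ F (FreeGroup.of j) - 1) * u j ∈ leftAugIdeal N) :
    (fun i => if i ∈ s then u i else 0) ∈ foxRealizable hD N W hWN := by
  set y : J → ℤ[F] := fun j =>
    mapDomainLinearMap ℤ ℤ (fun g : F => cosetRep H N g) (u j * of ℤ F t⁻¹)
  have hyH : ∀ j ∈ s, y j ∈ supported ℤ ℤ (H : Set F) := by
    intro j hj
    refine mapDomain_mem_supported fun g' hg' => ?_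
    rw [of_apply, support_coeff_mul_single _ _ (by simp)] at hg'
    obtain ⟨g, hg, rfl⟩ := Finset.mem_map.mp hg'
    obtain ⟨a, ha, n, hn, rfl⟩ := (DoubleCoset.eq H N t g).mp (hu j hj g hg).symm
    simpa [mul_assoc] using cosetRep_mem ha (hN.conj_mem n hn t)
  have hy : ∀ j, y j * of ℤ F t ≡ u j [SMOD leftAugIdeal N] := fun j => by
    have h := (mapDomain_cosetRep_smodEq H (u j * of ℤ F t⁻¹)).mul_of hN t
    rwa [mul_assoc, ← map_mul, inv_mul_cancel, map_one, mul_one] at h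
  set z := ∑ j ∈ s, (of ℤ F (FreeGroup.of j) - 1) * y j
  have hzH : z ∈ supported ℤ ℤ (H : Set F) := sum_mem fun j hj => by
    rw [sub_mul, one_mul]
    exact sub_mem (of_mul_mem_supported (hs j hj) (hyH j hj)) (hyH j hj)
  have hzN : z ∈ leftAugIdeal N := by
    have h1 : z * of ℤ F t ≡ ∑ j ∈ s, (of ℤ F (FreeGroup.of j) - 1) * u j
        [SMOD leftAugIdeal N] := by
      rw [Finset.sum_mul]
      exact SModEq.sum fun j _ => by rw [mul_assoc]; exact (hy j).smul _
    have h2 := mul_of_mem_leftAugIdeal hN (SModEq.zero.mp (h1.trans (SModEq.zero.mpr hsum))) t⁻¹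
    rwa [mul_assoc, ← map_mul, mul_inv_cancel, map_one, mul_one] at h2
  have hDz : ∀ i, D i z = if i ∈ s then y i else 0 := fun i => by
    simp only [z, (hD i).map_sum, (hD i).map_of_sub_one_mul, Finset.sum_ite_eq]
  refine mem_foxRealizable_of_smodEq (mul_of_mem_foxRealizable hN hW
    (fox_mem_foxRealizable_of_mem_leftAugIdeal hHW
      (mem_leftAugIdeal_inf_of_mem_supported hzH hzN)) t) fun i => ?_
  simp only [hDz]
  split_ifs
  · exact (hy i).symm
  · rw [zero_mul]

/-- The fundamental formula gives `∑_{j ∈ K} (gⱼ - 1) Dⱼ v ∈ ℤ[F](N - 1)`; split it along the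
double cosets `H \ F / N` and apply `ite_mem_foxRealizable` to each piece. -/
lemma fox_mem_foxRealizable (hN : N.Normal) (hW : W.Normal) {H : Subgroup F} (hHW : H ⊓ N ≤ W)
    {K : Set J} (hK : ∀ j ∈ K, FreeGroup.of j ∈ H) {v : F} (hv : v ∈ foxSubgroup hD N Kᶜ) :
    (fun i => D i (of ℤ F v)) ∈ foxRealizable hD N W hWN := by
  classical
  obtain ⟨s, hs0, hs⟩ := exists_of_sub_one_eq_sum hD v
  set sK := s.filter (· ∈ K)
  set c := DoubleCoset.mk H N
  have hX : ∑ j ∈ sK, (of ℤ F (FreeGroup.of j) - 1) * D j (of ℤ F v) ∈ leftAugIdeal N := by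
    have h := hs s subset_rfl
    rw [← Finset.sum_filter_add_sum_filter_not s (· ∈ K)] at h
    rw [eq_sub_of_add_eq h.symm]
    exact sub_mem (of_sub_one_mem_leftAugIdeal hv.1) (sum_mem fun j hj =>
      Ideal.mul_mem_left _ _ (hv.2 j (Finset.mem_filter.mp hj).2))
  set O := sK.biUnion fun j => (D j (of ℤ F v)).coeff.support.image c
  have hcomp : ∀ ω ∈ O, (fun i => if i ∈ sK then component c ω (D i (of ℤ F v)) else 0) ∈
      foxRealizable hD N W hWN := fun ω _ => by
    refine ite_mem_foxRealizable hN hW hHW (fun j hj => hK j (Finset.mem_filter.mp hj).2)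
      (t := ω.out) (fun j _ g hg =>
        (eq_of_mem_support_component hg).trans (DoubleCoset.out_eq' H N ω).symm) ?_
    have h := component_mem_leftAugIdeal (fun g n hn => doubleCoset_mk_mul_right g hn) ω hX
    rwa [map_sum, Finset.sum_congr rfl fun j hj => by
      rw [sub_mul, one_mul, map_sub, component_of_mul (doubleCoset_mk_mul_left
        (hK j (Finset.mem_filter.mp hj).2)), ← sub_one_mul]] at h
  refine mem_foxRealizable_of_smodEq (sum_mem hcomp) fun i => ?_
  rw [Finset.sum_apply]
  by_cases hi : i ∈ sK
  · simp only [if_pos hi]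
    rw [sum_component _ fun g hg => Finset.mem_biUnion.mpr ⟨i, hi, Finset.mem_image_of_mem c hg⟩]
  · simp only [if_neg hi, Finset.sum_const_zero, SModEq.zero]
    by_cases hiK : i ∈ K
    · rw [hs0 i fun his => hi (Finset.mem_filter.mpr ⟨his, hiK⟩)]
      exact zero_mem _
    · exact hv.2 i hiK

end Realizable

theorem foxSubgroup_compl_eq (hN : N.Normal) (K : Set J) :
    foxSubgroup hD N Kᶜ = Subgroup.normalClosure
      ((Subgroup.closure (FreeGroup.of '' K) ⊓ N : Subgroup F) : Set F) ⊔ ⁅N, N⁆ := by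
  set W := Subgroup.normalClosure ((Subgroup.closure (FreeGroup.of '' K) ⊓ N : Subgroup F) : Set F)
  have hWN : W ≤ N := Subgroup.normalClosure_le_normal fun _ h => h.2
  have := foxSubgroup_normal hD hN Kᶜ
  refine le_antisymm (fun v hv => ?_) (sup_le (Subgroup.normalClosure_le_normal
    (closure_inf_le_foxSubgroup_compl hD K)) (commutator_le_foxSubgroup hD Kᶜ))
  obtain ⟨w, hw, hvw⟩ := fox_mem_foxRealizable (hWN := hWN) hN Subgroup.normalClosure_normal
    (fun _ h => Subgroup.subset_normalClosure h)
    (fun j hj => Subgroup.subset_closure ⟨j, hj, rfl⟩) hv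
  have hc : v * w⁻¹ ∈ ⁅N, N⁆ := foxSubgroup_univ_le_commutator hD
    ⟨mul_mem hv.1 (inv_mem (hWN hw)), fun i _ => SModEq.zero.mp <| by
      simpa using ((hD i).map_of_mul_smodEq v (inv_mem (hWN hw))).trans
        ((hvw i).add ((hD i).map_of_inv_smodEq (hWN hw)))⟩
  simpa using mul_mem (Subgroup.mem_sup_right hc) (Subgroup.mem_sup_left hw)

include hD in
lemma exists_mem_mul_mem {H : Subgroup F} {K : Set J} (hK : ∀ j ∈ K, FreeGroup.of j ∈ H) {v : F}
    (hv : ∀ k ∉ K, D k (of ℤ F v) ∈ leftAugIdeal N) : ∃ a ∈ H, ∃ m ∈ N, v = a * m := by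
  obtain ⟨s, -, hs⟩ := exists_of_sub_one_eq_sum hD v
  have h0 : mapDomainLinearMap ℤ ℤ (DoubleCoset.mk H N) (of ℤ F v - 1) = 0 := by
    rw [hs s subset_rfl, map_sum]
    refine Finset.sum_eq_zero fun j _ => ?_
    by_cases hj : j ∈ K
    · rw [sub_mul, one_mul, map_sub, mapDomain_of_mul (doubleCoset_mk_mul_left (hK j hj)),
        sub_self]
    · exact mapDomain_eq_zero_of_mem_leftAugIdeal (fun g n hn => doubleCoset_mk_mul_right g hn)
        (Ideal.mul_mem_left _ _ (hv j hj))
  rw [map_sub, sub_eq_zero, ← map_one (of ℤ F), of_apply, of_apply, mapDomainLinearMap_single,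
    mapDomainLinearMap_single, single_left_inj one_ne_zero, DoubleCoset.eq] at h0
  obtain ⟨a, ha, m, hm, h1⟩ := h0
  refine ⟨a⁻¹, inv_mem ha, m⁻¹, inv_mem hm, ?_⟩
  calc v = a⁻¹ * (a * v * m) * m⁻¹ := by group
    _ = a⁻¹ * m⁻¹ := by rw [← h1]; group

end FoxCalculus

open FoxCalculus in
/-- Theorem of Krasnikov: `D_k(v) ≡ 0 mod ℤ[F](N−1)` for all `k ∈ J \ K` iff
`v ∈ F_K · (F_K ∩ N)^F · [N,N]`. -/
theorem fox_deriv_krasnikov (J : Type) [DecidableEq J]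
    (D : J → MonoidAlgebra ℤ (FreeGroup J) → MonoidAlgebra ℤ (FreeGroup J))
    (hD : ∀ k, IsFoxDeriv J k (D k))
    (K : Set J) (FK : Subgroup (FreeGroup J))
    (hFK : FK = Subgroup.closure (FreeGroup.of '' K))
    (N : Subgroup (FreeGroup J)) (hN : N.Normal) (v : FreeGroup J) :
    (∀ k ∉ K, D k (MonoidAlgebra.of ℤ (FreeGroup J) v) ∈
        Submodule.span (MonoidAlgebra ℤ (FreeGroup J))
          ((fun n => MonoidAlgebra.of ℤ (FreeGroup J) n - 1) '' (N : Set (FreeGroup J)))) ↔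
      ∃ a ∈ FK, ∃ b ∈ Subgroup.normalClosure ((FK ⊓ N : Subgroup (FreeGroup J)) : Set (FreeGroup J)),
        ∃ c ∈ ⁅N, N⁆, v = a * b * c := by
  subst hFK
  have hK : ∀ j ∈ K, FreeGroup.of j ∈ Subgroup.closure (FreeGroup.of '' K) :=
    fun j hj => Subgroup.subset_closure ⟨j, hj, rfl⟩
  change (∀ k ∉ K, D k _ ∈ leftAugIdeal N) ↔ _
  constructor
  · intro hv
    obtain ⟨a, ha, m, hm, rfl⟩ := exists_mem_mul_mem hD hK hv
    have hmS : m ∈ foxSubgroup hD N Kᶜ := ⟨hm, fun k hk => by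
      rw [← (hD k).map_of_mul_of_mem_closure hk ha]; exact hv k hk⟩
    have := hN
    rw [foxSubgroup_compl_eq hD hN, Subgroup.mem_sup_of_normal_right] at hmS
    obtain ⟨b, hb, c, hc, rfl⟩ := hmS
    exact ⟨a, ha, b, hb, c, hc, (mul_assoc _ _ _).symm⟩
  · rintro ⟨a, ha, b, hb, c, hc, rfl⟩ k hk
    have hbc : b * c ∈ foxSubgroup hD N Kᶜ := by
      rw [foxSubgroup_compl_eq hD hN]
      exact mul_mem (Subgroup.mem_sup_left hb) (Subgroup.mem_sup_right hc)
    rw [mul_assoc, (hD k).map_of_mul_of_mem_closure hk ha]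
    exact hbc.2 k hk
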